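/- (Second family, Case λ₃ ≠ 0, λ₂ = 0, equation (3.11)) Under the ruled hypothesis Q = −uP, u_y + u·u_x = 0, suppose Δx = λ₁·x, Δy = λ₂·y, Δf = λ₃·f on D for real constants with λ₃ ≠ 0, λ₂ = 0, and suppose P is nowhere zero on D. Then u·H₁ = −W, i.e. u·(f_xx + f_yy) = −(1 + P²(1 + u²)), the constant λ₁ is nonzero, and f satisfies the partial differential equation f_xx + f_yy = −½(λ₁·xy + 2λ₃·f)·(1 + (f_x + y/2)²(1 + u²))² on D. -/

import Mathlib

noncomputable section

/-- Partial derivative with respect to the first (x) variable. -/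
def pdx (f : ℝ × ℝ → ℝ) : ℝ × ℝ → ℝ := fun p => fderiv ℝ f p (1, 0)

/-- Partial derivative with respect to the second (y) variable. -/
def pdy (f : ℝ × ℝ → ℝ) : ℝ × ℝ → ℝ := fun p => fderiv ℝ f p (0, 1)

/-- `P = f_x + y/2`. -/
def Pf (f : ℝ × ℝ → ℝ) : ℝ × ℝ → ℝ := fun p => pdx f p + p.2 / 2

/-- `Q = f_y - x/2`. -/
def Qf (f : ℝ × ℝ → ℝ) : ℝ × ℝ → ℝ := fun p => pdy f p - p.1 / 2

/-- First fundamental form coefficient `E = 1 + P²`. -/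
def Ef (f : ℝ × ℝ → ℝ) : ℝ × ℝ → ℝ := fun p => 1 + Pf f p ^ 2

/-- First fundamental form coefficient `F = P·Q`. -/
def Ff (f : ℝ × ℝ → ℝ) : ℝ × ℝ → ℝ := fun p => Pf f p * Qf f p

/-- First fundamental form coefficient `G = 1 + Q²`. -/
def Gf (f : ℝ × ℝ → ℝ) : ℝ × ℝ → ℝ := fun p => 1 + Qf f p ^ 2

/-- `W = √(EG − F²) = √(1 + P² + Q²)`. -/
def Wf (f : ℝ × ℝ → ℝ) : ℝ × ℝ → ℝ := fun p => Real.sqrt (1 + Pf f p ^ 2 + Qf f p ^ 2)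

/-- Second fundamental form coefficient `L = (f_xx + PQ)/W`. -/
def Lf (f : ℝ × ℝ → ℝ) : ℝ × ℝ → ℝ := fun p => (pdx (pdx f) p + Pf f p * Qf f p) / Wf f p

/-- Second fundamental form coefficient `M = (f_xy + (Q² − P²)/2)/W`. -/
def Mf (f : ℝ × ℝ → ℝ) : ℝ × ℝ → ℝ :=
  fun p => (pdx (pdy f) p + (Qf f p ^ 2 - Pf f p ^ 2) / 2) / Wf f p

/-- Second fundamental form coefficient `N = (f_yy − PQ)/W`. -/
def Nf (f : ℝ × ℝ → ℝ) : ℝ × ℝ → ℝ := fun p => (pdy (pdy f) p - Pf f p * Qf f p) / Wf f p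

/-- Mean curvature `H = (EN − 2FM + GL)/(2W²)`. -/
def Hf (f : ℝ × ℝ → ℝ) : ℝ × ℝ → ℝ :=
  fun p => (Ef f p * Nf f p - 2 * Ff f p * Mf f p + Gf f p * Lf f p) / (2 * Wf f p ^ 2)

/-- The Laplace–Beltrami operator of the graph of `f`, with the sign convention
`Δφ = −(1/W)[∂_x((G φ_x − F φ_y)/W) + ∂_y((−F φ_x + E φ_y)/W)]`. -/
def lapS (f φ : ℝ × ℝ → ℝ) : ℝ × ℝ → ℝ := fun p =>
  -(1 / Wf f p) *
    (pdx (fun q => (Gf f q * pdx φ q - Ff f q * pdy φ q) / Wf f q) p +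
     pdy (fun q => (-(Ff f q) * pdx φ q + Ef f q * pdy φ q) / Wf f q) p)

/-- Mean curvature in the form `H = (f_xx + f_yy)/(2W³)`. -/
def Hm (f : ℝ × ℝ → ℝ) : ℝ × ℝ → ℝ :=
  fun p => (pdx (pdx f) p + pdy (pdy f) p) / (2 * Wf f p ^ 3)

/-- `H₁ = (f_xx + f_yy)/W`. -/
def H1f (f : ℝ × ℝ → ℝ) : ℝ × ℝ → ℝ :=
  fun p => (pdx (pdx f) p + pdy (pdy f) p) / Wf f p

/-!
Writing the Laplace–Beltrami operator in divergence form and differentiating the fluxes gives,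
with `H` the mean curvature, `Δx = 2HP/W + Q/W²`, `Δy = 2HQ/W − P/W²` and
`Δf = −2H/W − (y/2)Δx + (x/2)Δy`. Differentiating the ruling relation `Q + uP = 0` in `x` and `y`
and using `u_y + u u_x = 0` collapses `2W³H = G f_xx − 2F f_xy + E f_yy` to `f_xx + f_yy`.
Then `Δy = 0` and `P ≠ 0` give `u(f_xx + f_yy) = −W²`; if `λ₁` vanished, `Δx = 0` would give
`f_xx + f_yy = uW²` as well, so `(1 + u²)W² = 0`; and `Δf = λ₃f` becomes the stated equation.
-/

open Topology

theorem fderiv_fun_div_apply {𝕜 E : Type*} [NontriviallyNormedField 𝕜] [NormedAddCommGroup E]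
    [NormedSpace 𝕜 E] {a b : E → 𝕜} {x : E} (ha : DifferentiableAt 𝕜 a x)
    (hb : DifferentiableAt 𝕜 b x) (hb0 : b x ≠ 0) (v : E) :
    fderiv 𝕜 (fun y => a y / b y) x v =
      (fderiv 𝕜 a x v * b x - a x * fderiv 𝕜 b x v) / b x ^ 2 := by
  have hinv := (hasDerivAt_inv hb0).comp_hasFDerivAt x hb.hasFDerivAt
  simp only [div_eq_mul_inv]
  rw [show (fun y => a y * (b y)⁻¹) = a * ((·⁻¹) ∘ b) from rfl, (ha.hasFDerivAt.mul hinv).fderiv]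
  simp only [Function.comp_apply, add_apply, smul_apply, smul_eq_mul, neg_mul, mul_neg]
  field_simp
  ring

variable {f φ u : ℝ × ℝ → ℝ} {p : ℝ × ℝ}

theorem Wf_pos (f : ℝ × ℝ → ℝ) (p : ℝ × ℝ) : 0 < Wf f p := by unfold Wf; positivity

theorem Wf_sq (f : ℝ × ℝ → ℝ) (p : ℝ × ℝ) : Wf f p ^ 2 = 1 + Pf f p ^ 2 + Qf f p ^ 2 :=
  Real.sq_sqrt (by positivity)

theorem pdx_def (g : ℝ × ℝ → ℝ) (p : ℝ × ℝ) : pdx g p = fderiv ℝ g p (1, 0) := rfl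

theorem pdy_def (g : ℝ × ℝ → ℝ) (p : ℝ × ℝ) : pdy g p = fderiv ℝ g p (0, 1) := rfl

theorem ContDiffAt.differentiableAt_pdx (hf : ContDiffAt ℝ 2 f p) :
    DifferentiableAt ℝ (pdx f) p :=
  ((hf.fderiv_right (m := 1) (by norm_num)).differentiableAt one_ne_zero).clm_apply
    (differentiableAt_const _)

theorem ContDiffAt.differentiableAt_pdy (hf : ContDiffAt ℝ 2 f p) :
    DifferentiableAt ℝ (pdy f) p :=
  ((hf.fderiv_right (m := 1) (by norm_num)).differentiableAt one_ne_zero).clm_apply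
    (differentiableAt_const _)

theorem pdy_pdx_eq_pdx_pdy (hf : ContDiffAt ℝ 2 f p) : pdy (pdx f) p = pdx (pdy f) p := by
  have hd : DifferentiableAt ℝ (fderiv ℝ f) p :=
    (hf.fderiv_right (m := 1) (by norm_num)).differentiableAt one_ne_zero
  have hsymm := hf.isSymmSndFDerivAt (by simp [minSmoothness_of_isRCLikeNormedField])
  change fderiv ℝ (fun q => fderiv ℝ f q (1, 0)) p (0, 1)
    = fderiv ℝ (fun q => fderiv ℝ f q (0, 1)) p (1, 0)
  rw [fderiv_clm_apply hd (differentiableAt_const _),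
    fderiv_clm_apply hd (differentiableAt_const _)]
  simpa using hsymm (0, 1) (1, 0)

theorem fderiv_Pf_apply (hfx : DifferentiableAt ℝ (pdx f) p) (v : ℝ × ℝ) :
    fderiv ℝ (Pf f) p v = fderiv ℝ (pdx f) p v + v.2 / 2 := by
  change fderiv ℝ (fun q => pdx f q + q.2 / 2) p v = _
  simp only [div_eq_mul_inv]
  rw [fderiv_fun_add hfx (by fun_prop), fderiv_mul_const differentiableAt_snd]
  simp [fderiv_snd, mul_comm]

theorem fderiv_Qf_apply (hfy : DifferentiableAt ℝ (pdy f) p) (v : ℝ × ℝ) :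
    fderiv ℝ (Qf f) p v = fderiv ℝ (pdy f) p v - v.1 / 2 := by
  change fderiv ℝ (fun q => pdy f q - q.1 / 2) p v = _
  simp only [div_eq_mul_inv]
  rw [fderiv_fun_sub hfy (by fun_prop), fderiv_mul_const differentiableAt_fst]
  simp [fderiv_fst, mul_comm]

theorem fderiv_Ef_apply (hP : DifferentiableAt ℝ (Pf f) p) (v : ℝ × ℝ) :
    fderiv ℝ (Ef f) p v = 2 * Pf f p * fderiv ℝ (Pf f) p v := by
  change fderiv ℝ (fun q => 1 + Pf f q ^ 2) p v = _
  rw [fderiv_const_add, fderiv_fun_pow 2 hP]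
  simp

theorem fderiv_Gf_apply (hQ : DifferentiableAt ℝ (Qf f) p) (v : ℝ × ℝ) :
    fderiv ℝ (Gf f) p v = 2 * Qf f p * fderiv ℝ (Qf f) p v := by
  change fderiv ℝ (fun q => 1 + Qf f q ^ 2) p v = _
  rw [fderiv_const_add, fderiv_fun_pow 2 hQ]
  simp

theorem fderiv_Ff_apply (hP : DifferentiableAt ℝ (Pf f) p) (hQ : DifferentiableAt ℝ (Qf f) p)
    (v : ℝ × ℝ) :
    fderiv ℝ (Ff f) p v = Pf f p * fderiv ℝ (Qf f) p v + Qf f p * fderiv ℝ (Pf f) p v := by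
  change fderiv ℝ (fun q => Pf f q * Qf f q) p v = _
  simp [fderiv_fun_mul hP hQ]

theorem fderiv_Wf_apply (hP : DifferentiableAt ℝ (Pf f) p) (hQ : DifferentiableAt ℝ (Qf f) p)
    (v : ℝ × ℝ) :
    fderiv ℝ (Wf f) p v =
      (Pf f p * fderiv ℝ (Pf f) p v + Qf f p * fderiv ℝ (Qf f) p v) / Wf f p := by
  have h0 : 1 + Pf f p ^ 2 + Qf f p ^ 2 ≠ 0 := by positivity
  change fderiv ℝ (fun q => √(1 + Pf f q ^ 2 + Qf f q ^ 2)) p v = _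
  rw [fderiv_sqrt (f := fun q => 1 + Pf f q ^ 2 + Qf f q ^ 2) (by fun_prop) h0,
    fderiv_fun_add (by fun_prop) (by fun_prop), fderiv_const_add,
    fderiv_fun_pow 2 hP, fderiv_fun_pow 2 hQ]
  simp only [one_div, mul_inv_rev, Nat.add_one_sub_one, pow_one, nsmul_eq_mul, Nat.cast_ofNat,
    smul_add, add_apply, smul_apply, smul_eq_mul, Wf]
  field_simp

theorem lapS_mul_Wf_pow_four (hP : DifferentiableAt ℝ (Pf f) p) (hQ : DifferentiableAt ℝ (Qf f) p)
    (hφx : DifferentiableAt ℝ (pdx φ) p) (hφy : DifferentiableAt ℝ (pdy φ) p) :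
    lapS f φ p * Wf f p ^ 4 =
      (Gf f p * pdx φ p - Ff f p * pdy φ p) * (Pf f p * pdx (Pf f) p + Qf f p * pdx (Qf f) p)
      + (-Ff f p * pdx φ p + Ef f p * pdy φ p) * (Pf f p * pdy (Pf f) p + Qf f p * pdy (Qf f) p)
      - Wf f p ^ 2 * (Gf f p * pdx (pdx φ) p - Ff f p * (pdy (pdx φ) p + pdx (pdy φ) p)
          + Ef f p * pdy (pdy φ) p
          + (2 * Qf f p * pdx (Qf f) p - Pf f p * pdy (Qf f) p - Qf f p * pdy (Pf f) p) * pdx φ p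
          + (2 * Pf f p * pdy (Pf f) p - Pf f p * pdx (Qf f) p - Qf f p * pdx (Pf f) p)
            * pdy φ p) := by
  have hW0 : Wf f p ≠ 0 := (Wf_pos f p).ne'
  have hE : DifferentiableAt ℝ (Ef f) p := by unfold Ef; fun_prop
  have hF : DifferentiableAt ℝ (Ff f) p := by unfold Ff; fun_prop
  have hG : DifferentiableAt ℝ (Gf f) p := by unfold Gf; fun_prop
  have hW : DifferentiableAt ℝ (Wf f) p := by
    unfold Wf; exact DifferentiableAt.sqrt (by fun_prop) (by positivity)
  simp only [lapS]
  rw [pdx_def, pdy_def, fderiv_fun_div_apply (by fun_prop) hW hW0,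
    fderiv_fun_div_apply (by fun_prop) hW hW0]
  simp (disch := fun_prop) only [fderiv_fun_sub, fderiv_fun_add, fderiv_fun_mul, fderiv_fun_neg,
    add_apply, sub_apply, neg_apply, smul_apply, smul_eq_mul, fderiv_Ef_apply hP,
    fderiv_Ff_apply hP hQ, fderiv_Gf_apply hQ, fderiv_Wf_apply hP hQ, ← pdx_def, ← pdy_def]
  field_simp
  ring

theorem ContDiffAt.differentiableAt_Pf (hf : ContDiffAt ℝ 2 f p) : DifferentiableAt ℝ (Pf f) p :=
  hf.differentiableAt_pdx.add (by fun_prop)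

theorem ContDiffAt.differentiableAt_Qf (hf : ContDiffAt ℝ 2 f p) : DifferentiableAt ℝ (Qf f) p :=
  hf.differentiableAt_pdy.sub (by fun_prop)

theorem pdx_Pf (hf : ContDiffAt ℝ 2 f p) : pdx (Pf f) p = pdx (pdx f) p := by
  rw [pdx_def, fderiv_Pf_apply hf.differentiableAt_pdx]
  simp [pdx_def]

theorem pdy_Pf (hf : ContDiffAt ℝ 2 f p) : pdy (Pf f) p = pdx (pdy f) p + 1 / 2 := by
  rw [pdy_def, fderiv_Pf_apply hf.differentiableAt_pdx, ← pdy_def, pdy_pdx_eq_pdx_pdy hf]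

theorem pdx_Qf (hf : ContDiffAt ℝ 2 f p) : pdx (Qf f) p = pdx (pdy f) p - 1 / 2 := by
  rw [pdx_def, fderiv_Qf_apply hf.differentiableAt_pdy, ← pdx_def]

theorem pdy_Qf (hf : ContDiffAt ℝ 2 f p) : pdy (Qf f) p = pdy (pdy f) p := by
  rw [pdy_def, fderiv_Qf_apply hf.differentiableAt_pdy]
  simp [pdy_def]

theorem pdx_fst : pdx (fun q : ℝ × ℝ => q.1) = fun _ => 1 := by
  ext; simp [pdx, hasFDerivAt_fst.fderiv]

theorem pdy_fst : pdy (fun q : ℝ × ℝ => q.1) = fun _ => 0 := by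
  ext; simp [pdy, hasFDerivAt_fst.fderiv]

theorem pdx_snd : pdx (fun q : ℝ × ℝ => q.2) = fun _ => 0 := by
  ext; simp [pdx, hasFDerivAt_snd.fderiv]

theorem pdy_snd : pdy (fun q : ℝ × ℝ => q.2) = fun _ => 1 := by
  ext; simp [pdy, hasFDerivAt_snd.fderiv]

theorem pdx_const (c : ℝ) : pdx (fun _ : ℝ × ℝ => c) = fun _ => 0 := by
  ext; simp [pdx]

theorem pdy_const (c : ℝ) : pdy (fun _ : ℝ × ℝ => c) = fun _ => 0 := by
  ext; simp [pdy]

theorem Hf_eq_div (f : ℝ × ℝ → ℝ) (p : ℝ × ℝ) : Hf f p =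
    (Gf f p * pdx (pdx f) p - 2 * Ff f p * pdx (pdy f) p + Ef f p * pdy (pdy f) p)
      / (2 * Wf f p ^ 3) := by
  have hW0 : Wf f p ≠ 0 := (Wf_pos f p).ne'
  simp only [Hf, Lf, Mf, Nf, Ef, Ff, Gf]
  field_simp
  ring

theorem lapS_fst (hf : ContDiffAt ℝ 2 f p) :
    lapS f (fun q => q.1) p = 2 * Hf f p * Pf f p / Wf f p + Qf f p / Wf f p ^ 2 := by
  have h := lapS_mul_Wf_pow_four (φ := fun q => q.1) hf.differentiableAt_Pf
    hf.differentiableAt_Qf (by rw [pdx_fst]; fun_prop) (by rw [pdy_fst]; fun_prop)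
  simp only [pdx_fst, pdy_fst, pdx_const, pdy_const, pdx_Pf hf, pdy_Pf hf, pdx_Qf hf,
    pdy_Qf hf, Ef, Ff, Gf] at h
  have hW0 : Wf f p ≠ 0 := (Wf_pos f p).ne'
  rw [Hf_eq_div]
  simp only [Ef, Ff, Gf]
  field_simp
  linear_combination
    h + (Qf f p / 2 - Qf f p * pdx (pdy f) p + Pf f p * pdy (pdy f) p) * Wf_sq f p

theorem lapS_snd (hf : ContDiffAt ℝ 2 f p) :
    lapS f (fun q => q.2) p = 2 * Hf f p * Qf f p / Wf f p - Pf f p / Wf f p ^ 2 := by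
  have h := lapS_mul_Wf_pow_four (φ := fun q => q.2) hf.differentiableAt_Pf
    hf.differentiableAt_Qf (by rw [pdx_snd]; fun_prop) (by rw [pdy_snd]; fun_prop)
  simp only [pdx_snd, pdy_snd, pdx_const, pdy_const, pdx_Pf hf, pdy_Pf hf, pdx_Qf hf,
    pdy_Qf hf, Ef, Ff, Gf] at h
  have hW0 : Wf f p ≠ 0 := (Wf_pos f p).ne'
  rw [Hf_eq_div]
  simp only [Ef, Ff, Gf]
  field_simp
  linear_combination
    h + (Qf f p * pdx (pdx f) p - Pf f p / 2 - Pf f p * pdx (pdy f) p) * Wf_sq f p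

theorem lapS_self (hf : ContDiffAt ℝ 2 f p) :
    lapS f f p = -(2 * Hf f p / Wf f p) - p.2 / 2 * lapS f (fun q => q.1) p
      + p.1 / 2 * lapS f (fun q => q.2) p := by
  have h := lapS_mul_Wf_pow_four hf.differentiableAt_Pf hf.differentiableAt_Qf
    hf.differentiableAt_pdx hf.differentiableAt_pdy
  have hfx : pdx f p = Pf f p - p.2 / 2 := by simp [Pf]
  have hfy : pdy f p = Qf f p + p.1 / 2 := by simp [Qf]
  simp only [pdy_pdx_eq_pdx_pdy hf, pdx_Pf hf, pdy_Pf hf, pdx_Qf hf, pdy_Qf hf, hfx, hfy,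
    Ef, Ff, Gf] at h
  have hW0 : Wf f p ≠ 0 := (Wf_pos f p).ne'
  rw [lapS_fst hf, lapS_snd hf, Hf_eq_div]
  simp only [Ef, Ff, Gf]
  field_simp
  linear_combination 2 * h
    + (Qf f p * p.2 * (pdx (pdy f) p - 1 / 2) + Qf f p * p.1 * pdx (pdx f) p
      - Pf f p * p.2 * pdy (pdy f) p - Pf f p * p.1 * (pdx (pdy f) p + 1 / 2)
      - 2 * (pdx (pdx f) p + pdy (pdy f) p)) * Wf_sq f p

theorem fderiv_Qf_of_ruled (hP : DifferentiableAt ℝ (Pf f) p) (hu : DifferentiableAt ℝ u p)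
    (hruled : ∀ᶠ q in 𝓝 p, Qf f q = -u q * Pf f q) (v : ℝ × ℝ) :
    fderiv ℝ (Qf f) p v = -(u p * fderiv ℝ (Pf f) p v + Pf f p * fderiv ℝ u p v) := by
  rw [Filter.EventuallyEq.fderiv_eq hruled, fderiv_fun_mul (c := fun x => -u x) hu.neg hP,
    fderiv_fun_neg]
  simp only [neg_smul, smul_neg, add_apply, neg_apply, smul_apply, smul_eq_mul, neg_add_rev]
  ring

theorem Hf_eq_Hm_of_ruled (hf : ContDiffAt ℝ 2 f p) (hu : DifferentiableAt ℝ u p)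
    (hruled : ∀ᶠ q in 𝓝 p, Qf f q = -u q * Pf f q) (hburgers : pdy u p + u p * pdx u p = 0) :
    Hf f p = Hm f p := by
  have hx := fderiv_Qf_of_ruled hf.differentiableAt_Pf hu hruled (1, 0)
  have hy := fderiv_Qf_of_ruled hf.differentiableAt_Pf hu hruled (0, 1)
  simp only [← pdx_def, ← pdy_def, pdx_Pf hf, pdy_Pf hf, pdx_Qf hf, pdy_Qf hf] at hx hy
  rw [Hf_eq_div, Hm]
  congr 1
  simp only [Ef, Ff, Gf, hruled.self_of_nhds]
  linear_combination Pf f p ^ 2 * (u p * hx + hy - Pf f p * hburgers)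

theorem Wf_sq_of_ruled (hQ : Qf f p = -u p * Pf f p) :
    Wf f p ^ 2 = 1 + Pf f p ^ 2 * (1 + u p ^ 2) := by
  rw [Wf_sq, hQ]; ring

theorem mul_pdx_pdx_add_pdy_pdy_eq_neg_Wf_sq (hf : ContDiffAt ℝ 2 f p) (hH : Hf f p = Hm f p)
    (hQ : Qf f p = -u p * Pf f p) (hP : Pf f p ≠ 0) (h2 : lapS f (fun q => q.2) p = 0) :
    u p * (pdx (pdx f) p + pdy (pdy f) p) = -Wf f p ^ 2 := by
  have hW0 : Wf f p ≠ 0 := (Wf_pos f p).ne'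
  rw [lapS_snd hf, hH, Hm, hQ] at h2
  field_simp at h2
  exact mul_left_cancel₀ hP (by linear_combination -h2)

theorem lapS_fst_ne_zero (hf : ContDiffAt ℝ 2 f p) (hH : Hf f p = Hm f p)
    (hQ : Qf f p = -u p * Pf f p) (hP : Pf f p ≠ 0)
    (hΔ : u p * (pdx (pdx f) p + pdy (pdy f) p) = -Wf f p ^ 2) :
    lapS f (fun q => q.1) p ≠ 0 := by
  have hW0 : Wf f p ≠ 0 := (Wf_pos f p).ne'
  intro h1
  rw [lapS_fst hf, hH, Hm, hQ] at h1
  field_simp at h1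
  have hΔ' : pdx (pdx f) p + pdy (pdy f) p = u p * Wf f p ^ 2 :=
    mul_left_cancel₀ hP (by linear_combination h1)
  have : (1 + u p ^ 2) * Wf f p ^ 2 = 0 := by rw [hΔ'] at hΔ; linear_combination hΔ
  exact absurd this (by positivity)

theorem pdx_pdx_add_pdy_pdy_eq_of_lapS_eigen (hf : ContDiffAt ℝ 2 f p) (hH : Hf f p = Hm f p)
    {l1 l2 l3 : ℝ} (h1 : lapS f (fun q => q.1) p = l1 * p.1)
    (h2 : lapS f (fun q => q.2) p = l2 * p.2) (h3 : lapS f f p = l3 * f p) :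
    pdx (pdx f) p + pdy (pdy f) p =
      -(1 / 2) * ((l1 - l2) * (p.1 * p.2) + 2 * l3 * f p) * Wf f p ^ 4 := by
  have hW0 : Wf f p ≠ 0 := (Wf_pos f p).ne'
  have h := lapS_self hf
  rw [h1, h2, h3, hH, Hm] at h
  field_simp at h
  linear_combination h / 2

theorem finite_type_S2_case_l3_ne_zero_l2_zero_general
    (D : Set (ℝ × ℝ)) (hD : IsOpen D) (hDne : D.Nonempty)
    (f : ℝ × ℝ → ℝ) (hf : ContDiffOn ℝ (⊤ : ℕ∞) f D)
    (u : ℝ × ℝ → ℝ) (hu : ContDiffOn ℝ (⊤ : ℕ∞) u D)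
    (hruled : ∀ p ∈ D, Qf f p = -(u p) * Pf f p)
    (hburgers : ∀ p ∈ D, pdy u p + u p * pdx u p = 0)
    (l1 l2 l3 : ℝ)
    (h1 : ∀ p ∈ D, lapS f (fun q => q.1) p = l1 * p.1)
    (h2 : ∀ p ∈ D, lapS f (fun q => q.2) p = l2 * p.2)
    (h3 : ∀ p ∈ D, lapS f f p = l3 * f p)
    (hl2 : l2 = 0)
    (hP : ∀ p ∈ D, Pf f p ≠ 0) :
    (∀ p ∈ D,
      u p * H1f f p = -(Wf f p) ∧
      u p * (pdx (pdx f) p + pdy (pdy f) p) = -(1 + Pf f p ^ 2 * (1 + u p ^ 2))) ∧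
    l1 ≠ 0 ∧
    (∀ p ∈ D,
      pdx (pdx f) p + pdy (pdy f) p =
        -(1 / 2) * (l1 * (p.1 * p.2) + 2 * l3 * f p) *
          (1 + (pdx f p + p.2 / 2) ^ 2 * (1 + u p ^ 2)) ^ 2) := by
  subst hl2
  have hC2 : ∀ p ∈ D, ContDiffAt ℝ 2 f p := fun p hp =>
    (hf.contDiffAt (hD.mem_nhds hp)).of_le (WithTop.coe_le_coe.2 le_top)
  have hH : ∀ p ∈ D, Hf f p = Hm f p := fun p hp =>
    Hf_eq_Hm_of_ruled (hC2 p hp) ((hu.contDiffAt (hD.mem_nhds hp)).differentiableAt (by simp))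
      (Filter.eventually_of_mem (hD.mem_nhds hp) hruled) (hburgers p hp)
  have hΔ : ∀ p ∈ D, u p * (pdx (pdx f) p + pdy (pdy f) p) = -Wf f p ^ 2 := fun p hp =>
    mul_pdx_pdx_add_pdy_pdy_eq_neg_Wf_sq (hC2 p hp) (hH p hp) (hruled p hp) (hP p hp)
      (by simp [h2 p hp])
  refine ⟨fun p hp => ⟨?_, ?_⟩, ?_, fun p hp => ?_⟩
  · have hW0 : Wf f p ≠ 0 := (Wf_pos f p).ne'
    rw [H1f, mul_div_assoc', hΔ p hp]
    field_simp
  · rw [hΔ p hp, Wf_sq_of_ruled (hruled p hp)]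
  · obtain ⟨p, hp⟩ := hDne
    rintro rfl
    exact lapS_fst_ne_zero (hC2 p hp) (hH p hp) (hruled p hp) (hP p hp) (hΔ p hp)
      (by simp [h1 p hp])
  · rw [pdx_pdx_add_pdy_pdy_eq_of_lapS_eigen (hC2 p hp) (hH p hp) (h1 p hp) (h2 p hp) (h3 p hp),
      show Wf f p ^ 4 = (Wf f p ^ 2) ^ 2 by ring, Wf_sq_of_ruled (hruled p hp), sub_zero]
    rfl

/-- **Second family, case `λ₃ ≠ 0`, `λ₂ = 0`** (equation (3.11)): under the ruled hypothesis
`Q = −uP`, `u_y + u·u_x = 0`, if `Δx = λ₁x`, `Δy = λ₂y`, `Δf = λ₃f` on `D` with `λ₃ ≠ 0`,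
`λ₂ = 0`, and `P` nowhere zero on `D`, then `uH₁ = −W`, i.e.
`u(f_xx + f_yy) = −(1 + P²(1 + u²))`, the constant `λ₁` is nonzero, and `f` satisfies
`f_xx + f_yy = −½(λ₁xy + 2λ₃f)(1 + (f_x + y/2)²(1 + u²))²` on `D`. -/
theorem finite_type_S2_case_l3_ne_zero_l2_zero
    (D : Set (ℝ × ℝ)) (hD : IsOpen D) (hDne : D.Nonempty)
    (f : ℝ × ℝ → ℝ) (hf : ContDiffOn ℝ (⊤ : ℕ∞) f D)
    (u : ℝ × ℝ → ℝ) (hu : ContDiffOn ℝ (⊤ : ℕ∞) u D)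
    (hruled : ∀ p ∈ D, Qf f p = -(u p) * Pf f p)
    (hburgers : ∀ p ∈ D, pdy u p + u p * pdx u p = 0)
    (l1 l2 l3 : ℝ)
    (h1 : ∀ p ∈ D, lapS f (fun q => q.1) p = l1 * p.1)
    (h2 : ∀ p ∈ D, lapS f (fun q => q.2) p = l2 * p.2)
    (h3 : ∀ p ∈ D, lapS f f p = l3 * f p)
    (hl3 : l3 ≠ 0) (hl2 : l2 = 0)
    (hP : ∀ p ∈ D, Pf f p ≠ 0) :
    (∀ p ∈ D,
      u p * H1f f p = -(Wf f p) ∧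
      u p * (pdx (pdx f) p + pdy (pdy f) p) = -(1 + Pf f p ^ 2 * (1 + u p ^ 2))) ∧
    l1 ≠ 0 ∧
    (∀ p ∈ D,
      pdx (pdx f) p + pdy (pdy f) p =
        -(1 / 2) * (l1 * (p.1 * p.2) + 2 * l3 * f p) *
          (1 + (pdx f p + p.2 / 2) ^ 2 * (1 + u p ^ 2)) ^ 2) :=
  finite_type_S2_case_l3_ne_zero_l2_zero_general D hD hDne f hf u hu hruled hburgers l1 l2 l3 h1 h2
    h3 hl2 hP
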